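/- arXiv:2201.00144 — 4 statements merged into one kernel-verified Lean document; each statement's English description precedes it below -/
import Mathlib

section
/- Let Σ: ẋ = f(x) + g(x)u, y = h(x) with f(0)=0, h(0)=0 be smooth. If there exist functions V(x) ≥ 0, L(x), W(x) such that ∇Vᵀf(x) = −Lᵀ(x)L(x), (1/2)gᵀ(x)∇V(x) = (1/2)∇h(x)f(x) − Wᵀ(x)L(x), and Wᵀ(x)W(x) = (1/2)[(∇h(x)g(x))ᵀ + ∇h(x)g(x)], then V̇(x(t)) ≤ ẏᵀ(t)u(t) along all trajectories, i.e. Σ is nonlinear negative imaginary with storage function V. -/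
/-!
Completing the square: at each state, the KYP equations turn the gap between the supply rate
`ẏᵀu` and the storage rate `V̇ = ∇Vᵀ(f + g u)` into `‖L + W u‖²`. The `f`-terms cancel via the
second equation, the quadratic term `uᵀ ∇h g u` only sees the symmetric part of `∇h g`, which
is `WᵀW` by the third, and the first supplies `‖L‖²`.
-/

open Matrix

theorem Matrix.transpose_mulVec_dotProduct {R m n : Type*} [CommSemiring R] [Fintype m]
    [Fintype n] (A : Matrix m n R) (x : m → R) (y : n → R) : (Aᵀ *ᵥ x) ⬝ᵥ y = x ⬝ᵥ (A *ᵥ y) := by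
  rw [dotProduct_comm, dotProduct_transpose_mulVec]

section
variable {R ι κ μ : Type*} [Field R] [NeZero (2 : R)] [Fintype ι] [Fintype κ] [Fintype μ]

theorem Matrix.mulVec_dotProduct_self_eq_of_transpose_mul_self_eq_symm
    {M : Matrix μ μ R} {W : Matrix κ μ R} (hW : Wᵀ * W = (1 / 2 : R) • (Mᵀ + M)) (u : μ → R) :
    (M *ᵥ u) ⬝ᵥ u = (W *ᵥ u) ⬝ᵥ (W *ᵥ u) := by
  have hquad := congrArg (fun A => (A *ᵥ u) ⬝ᵥ u) hW
  simp only [← mulVec_mulVec, smul_mulVec, add_mulVec, smul_dotProduct, add_dotProduct,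
    transpose_mulVec_dotProduct, smul_eq_mul] at hquad
  rw [dotProduct_comm u, ← two_mul, one_div, inv_mul_cancel_left₀ two_ne_zero] at hquad
  exact hquad.symm

theorem kyp_supplyRate_sub_storageRate_eq
    {p f : ι → R} {G : Matrix ι μ R} {J : Matrix μ ι R} {a : κ → R} {W : Matrix κ μ R}
    (h1 : p ⬝ᵥ f = -(a ⬝ᵥ a))
    (h2 : (1 / 2 : R) • (Gᵀ *ᵥ p) = (1 / 2 : R) • (J *ᵥ f) - Wᵀ *ᵥ a)
    (h3 : Wᵀ * W = (1 / 2 : R) • ((J * G)ᵀ + J * G)) (u : μ → R) :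
    (J *ᵥ (f + G *ᵥ u)) ⬝ᵥ u - p ⬝ᵥ (f + G *ᵥ u) = (a + W *ᵥ u) ⬝ᵥ (a + W *ᵥ u) := by
  have hinput := congrArg (· ⬝ᵥ u) h2
  simp only [smul_dotProduct, sub_dotProduct, transpose_mulVec_dotProduct, smul_eq_mul]
    at hinput
  field_simp at hinput
  have hquad := mulVec_dotProduct_self_eq_of_transpose_mul_self_eq_symm h3 u
  rw [← mulVec_mulVec] at hquad
  simp only [mulVec_add, add_dotProduct, dotProduct_add, dotProduct_comm (W *ᵥ u) a]
  linear_combination hquad - hinput - h1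
end

theorem kyp_storageRate_le_supplyRate {R ι κ μ : Type*} [Field R] [LinearOrder R]
    [IsStrictOrderedRing R] [Fintype ι] [Fintype κ] [Fintype μ]
    {p f : ι → R} {G : Matrix ι μ R} {J : Matrix μ ι R} {a : κ → R} {W : Matrix κ μ R}
    (h1 : p ⬝ᵥ f = -(a ⬝ᵥ a))
    (h2 : (1 / 2 : R) • (Gᵀ *ᵥ p) = (1 / 2 : R) • (J *ᵥ f) - Wᵀ *ᵥ a)
    (h3 : Wᵀ * W = (1 / 2 : R) • ((J * G)ᵀ + J * G)) (u : μ → R) :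
    p ⬝ᵥ (f + G *ᵥ u) ≤ (J *ᵥ (f + G *ᵥ u)) ⬝ᵥ u := by
  rw [← sub_nonneg, kyp_supplyRate_sub_storageRate_eq h1 h2 h3]
  exact Fintype.sum_nonneg fun _ => mul_self_nonneg _

theorem nni_kyp_sufficiency_general
    (n m k : ℕ)
    (f : (Fin n → ℝ) → (Fin n → ℝ))
    (g : (Fin n → ℝ) → Matrix (Fin n) (Fin m) ℝ)
    (Jh : (Fin n → ℝ) → Matrix (Fin m) (Fin n) ℝ)  -- Jacobian ∇h(x)
    (gradV : (Fin n → ℝ) → (Fin n → ℝ))             -- gradient ∇V(x)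
    (L : (Fin n → ℝ) → (Fin k → ℝ))
    (W : (Fin n → ℝ) → Matrix (Fin k) (Fin m) ℝ)
    (h1 : ∀ x, gradV x ⬝ᵥ f x = -(L x ⬝ᵥ L x))
    (h2 : ∀ x, (1/2 : ℝ) • ((g x)ᵀ *ᵥ gradV x)
              = (1/2 : ℝ) • (Jh x *ᵥ f x) - (W x)ᵀ *ᵥ L x)
    (h3 : ∀ x, (W x)ᵀ * W x = (1/2 : ℝ) • ((Jh x * g x)ᵀ + Jh x * g x)) :
    ∀ (x : Fin n → ℝ) (u : Fin m → ℝ),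
      gradV x ⬝ᵥ (f x + g x *ᵥ u) ≤ (Jh x *ᵥ (f x + g x *ᵥ u)) ⬝ᵥ u :=
  fun x => kyp_storageRate_le_supplyRate (h1 x) (h2 x) (h3 x)

/-- Nonlinear NI KYP lemma (sufficiency): if `∇Vᵀf = -LᵀL`,
`(1/2)gᵀ∇V = (1/2)∇h f - WᵀL`, and `WᵀW = (1/2)((∇h g)ᵀ + ∇h g)`,
then `V̇ ≤ ẏᵀu` along all trajectories of `ẋ = f(x)+g(x)u`, `y = h(x)`. -/
theorem nni_kyp_sufficiency
    (n m k : ℕ)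
    (f : (Fin n → ℝ) → (Fin n → ℝ))
    (g : (Fin n → ℝ) → Matrix (Fin n) (Fin m) ℝ)
    (Jh : (Fin n → ℝ) → Matrix (Fin m) (Fin n) ℝ)  -- Jacobian ∇h(x)
    (gradV : (Fin n → ℝ) → (Fin n → ℝ))             -- gradient ∇V(x)
    (V : (Fin n → ℝ) → ℝ) (hV : ∀ x, 0 ≤ V x)
    (hf0 : f 0 = 0)
    (L : (Fin n → ℝ) → (Fin k → ℝ))
    (W : (Fin n → ℝ) → Matrix (Fin k) (Fin m) ℝ)
    (h1 : ∀ x, gradV x ⬝ᵥ f x = -(L x ⬝ᵥ L x))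
    (h2 : ∀ x, (1/2 : ℝ) • ((g x)ᵀ *ᵥ gradV x)
              = (1/2 : ℝ) • (Jh x *ᵥ f x) - (W x)ᵀ *ᵥ L x)
    (h3 : ∀ x, (W x)ᵀ * W x = (1/2 : ℝ) • ((Jh x * g x)ᵀ + Jh x * g x)) :
    ∀ (x : Fin n → ℝ) (u : Fin m → ℝ),
      gradV x ⬝ᵥ (f x + g x *ᵥ u) ≤ (Jh x *ᵥ (f x + g x *ᵥ u)) ⬝ᵥ u :=
  nni_kyp_sufficiency_general n m k f g Jh gradV L W h1 h2 h3
end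

section
/- Conversely, if the input-affine system ẋ = f(x) + g(x)u, y = h(x) satisfies the NNI dissipation inequality ∇Vᵀ(x)(f(x)+g(x)u) ≤ (∇h(x)(f(x)+g(x)u))ᵀu for all x and u, with C¹ storage function V ≥ 0, and the quadratic-in-u nonnegative expression admits a factorization (L(x)+W(x)u)ᵀ(L(x)+W(x)u), then the functions L, W satisfy ∇Vᵀf = −LᵀL, (1/2)gᵀ∇V = (1/2)∇h·f − WᵀL, and WᵀW = (1/2)[(∇h·g)ᵀ + ∇h·g]. -/
/-!
The two sides of the factorization are quadratic polynomials in `u`, so their constant, linear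
and symmetrized quadratic coefficients agree: the constant term is recovered at `u = 0`, the
linear term by comparing `u` with `-u`, and the symmetric part of the quadratic term by
polarization along the standard basis.
-/

open Matrix

section
variable {ι : Type*} [Fintype ι] [DecidableEq ι] {R : Type*} [CommRing R]

theorem mulVec_single_one_dotProduct_single_one (A : Matrix ι ι R) (i j : ι) :
    (A *ᵥ Pi.single j 1) ⬝ᵥ Pi.single i 1 = A i j := by
  rw [dotProduct_single_one, mulVec_single_one]; rfl

theorem add_transpose_eq_of_quadForm_eq {A B : Matrix ι ι R}
    (h : ∀ u, (A *ᵥ u) ⬝ᵥ u = (B *ᵥ u) ⬝ᵥ u) : A + Aᵀ = B + Bᵀ := by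
  ext i j
  have polar : ∀ C : Matrix ι ι R, (C + Cᵀ) i j =
      (C *ᵥ (Pi.single i 1 + Pi.single j 1)) ⬝ᵥ (Pi.single i 1 + Pi.single j 1)
        - (C *ᵥ Pi.single i 1) ⬝ᵥ Pi.single i 1 - (C *ᵥ Pi.single j 1) ⬝ᵥ Pi.single j 1 := by
    intro C
    simp only [mulVec_add, add_dotProduct, dotProduct_add,
      mulVec_single_one_dotProduct_single_one, Matrix.add_apply, transpose_apply]
    ring
  rw [polar, polar, h, h, h]
end

theorem quadratic_coeffs_eq_of_forall_eq {ι K : Type*} [Fintype ι] [Field K] [CharZero K]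
    {a b : K} {v w : ι → K} {A B : Matrix ι ι K}
    (h : ∀ u, a + v ⬝ᵥ u + (A *ᵥ u) ⬝ᵥ u = b + w ⬝ᵥ u + (B *ᵥ u) ⬝ᵥ u) :
    a = b ∧ v = w ∧ A + Aᵀ = B + Bᵀ := by
  classical
  have hconst : a = b := by simpa using h 0
  have hlin : v = w := by
    refine dotProduct_eq v w fun u => ?_
    have hu := h u
    have hneg := h (-u)
    simp only [dotProduct_neg, mulVec_neg, neg_dotProduct, neg_neg] at hneg
    linear_combination (hu - hneg) / 2
  refine ⟨hconst, hlin, add_transpose_eq_of_quadForm_eq fun u => ?_⟩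
  simpa [hconst, hlin] using h u

section
variable {ι κ μ : Type*} [Fintype ι] [Fintype κ] [Fintype μ] {R : Type*} [CommRing R]

theorem dissipation_slack_expand (J : Matrix μ κ R) (G : Matrix κ μ R) (p a : κ → R) (u : μ → R) :
    (J *ᵥ (a + G *ᵥ u)) ⬝ᵥ u - p ⬝ᵥ (a + G *ᵥ u)
      = -(p ⬝ᵥ a) + (J *ᵥ a - Gᵀ *ᵥ p) ⬝ᵥ u + ((J * G) *ᵥ u) ⬝ᵥ u := by
  rw [mulVec_add, add_dotProduct, dotProduct_add, sub_dotProduct, ← mulVec_mulVec,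
    dotProduct_mulVec, mulVec_transpose]
  ring

theorem dotProduct_self_add_mulVec (l : ι → R) (M : Matrix ι μ R) (u : μ → R) :
    (l + M *ᵥ u) ⬝ᵥ (l + M *ᵥ u)
      = l ⬝ᵥ l + (2 • (Mᵀ *ᵥ l)) ⬝ᵥ u + ((Mᵀ * M) *ᵥ u) ⬝ᵥ u := by
  rw [add_dotProduct, dotProduct_add, dotProduct_add, smul_dotProduct, ← mulVec_mulVec,
    mulVec_transpose, mulVec_transpose, dotProduct_mulVec, dotProduct_comm (M *ᵥ u) l,
    dotProduct_mulVec, two_smul, dotProduct_mulVec (M *ᵥ u)]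
  ring
end

theorem nni_kyp_necessity_general
    (n m k : ℕ)
    (f : (Fin n → ℝ) → (Fin n → ℝ))
    (g : (Fin n → ℝ) → Matrix (Fin n) (Fin m) ℝ)
    (Jh : (Fin n → ℝ) → Matrix (Fin m) (Fin n) ℝ)
    (gradV : (Fin n → ℝ) → (Fin n → ℝ))
    (L : (Fin n → ℝ) → (Fin k → ℝ))
    (W : (Fin n → ℝ) → Matrix (Fin k) (Fin m) ℝ)
    -- factorization of the nonnegative quadratic form in u
    (hfact : ∀ (x : Fin n → ℝ) (u : Fin m → ℝ),
      (Jh x *ᵥ (f x + g x *ᵥ u)) ⬝ᵥ u - gradV x ⬝ᵥ (f x + g x *ᵥ u)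
        = (L x + W x *ᵥ u) ⬝ᵥ (L x + W x *ᵥ u)) :
    (∀ x, gradV x ⬝ᵥ f x = -(L x ⬝ᵥ L x)) ∧
    (∀ x, (1/2 : ℝ) • ((g x)ᵀ *ᵥ gradV x)
        = (1/2 : ℝ) • (Jh x *ᵥ f x) - (W x)ᵀ *ᵥ L x) ∧
    (∀ x, (W x)ᵀ * W x = (1/2 : ℝ) • ((Jh x * g x)ᵀ + Jh x * g x)) := by
  have coeffs (x : Fin n → ℝ) := quadratic_coeffs_eq_of_forall_eq fun u =>
    (dissipation_slack_expand (Jh x) (g x) (gradV x) (f x) u).symm.trans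
      ((hfact x u).trans (dotProduct_self_add_mulVec (L x) (W x) u))
  refine ⟨fun x => ?_, fun x => ?_, fun x => ?_⟩
  · linarith [(coeffs x).1]
  · have hlin : (g x)ᵀ *ᵥ gradV x = Jh x *ᵥ f x - 2 • ((W x)ᵀ *ᵥ L x) := by
      rw [← (coeffs x).2.1, sub_sub_cancel]
    rw [hlin]
    module
  · have hquad := (coeffs x).2.2
    rw [transpose_mul _ (W x), transpose_transpose] at hquad
    rw [add_comm, hquad]
    module

/-- Nonlinear NI KYP lemma (necessity direction): if the NNI dissipation
inequality holds and the nonnegative quadratic-in-`u` expression admits the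
factorization `(L(x)+W(x)u)ᵀ(L(x)+W(x)u)`, then `L`, `W` satisfy the three
KYP identities. -/
theorem nni_kyp_necessity
    (n m k : ℕ)
    (f : (Fin n → ℝ) → (Fin n → ℝ))
    (g : (Fin n → ℝ) → Matrix (Fin n) (Fin m) ℝ)
    (Jh : (Fin n → ℝ) → Matrix (Fin m) (Fin n) ℝ)
    (gradV : (Fin n → ℝ) → (Fin n → ℝ))
    (V : (Fin n → ℝ) → ℝ) (hV : ∀ x, 0 ≤ V x)
    (hf0 : f 0 = 0)
    (L : (Fin n → ℝ) → (Fin k → ℝ))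
    (W : (Fin n → ℝ) → Matrix (Fin k) (Fin m) ℝ)
    -- NNI dissipation inequality
    (hdiss : ∀ (x : Fin n → ℝ) (u : Fin m → ℝ),
      gradV x ⬝ᵥ (f x + g x *ᵥ u) ≤ (Jh x *ᵥ (f x + g x *ᵥ u)) ⬝ᵥ u)
    -- factorization of the nonnegative quadratic form in u
    (hfact : ∀ (x : Fin n → ℝ) (u : Fin m → ℝ),
      (Jh x *ᵥ (f x + g x *ᵥ u)) ⬝ᵥ u - gradV x ⬝ᵥ (f x + g x *ᵥ u)
        = (L x + W x *ᵥ u) ⬝ᵥ (L x + W x *ᵥ u)) :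
    (∀ x, gradV x ⬝ᵥ f x = -(L x ⬝ᵥ L x)) ∧
    (∀ x, (1/2 : ℝ) • ((g x)ᵀ *ᵥ gradV x)
        = (1/2 : ℝ) • (Jh x *ᵥ f x) - (W x)ᵀ *ᵥ L x) ∧
    (∀ x, (W x)ᵀ * W x = (1/2 : ℝ) • ((Jh x * g x)ᵀ + Jh x * g x)) :=
  nni_kyp_necessity_general n m k f g Jh gradV L W hfact
end

section
/- If systems H₁ and H₂ are both nonlinear negative imaginary with storage functions V₁ and V₂, then their positive feedback interconnection u₁ = y₂ + r₁, u₂ = y₁ with external input r₁ = 0 satisfies d/dt[V₁(x₁) + V₂(x₂) − y₁ᵀy₂] ≤ 0 along trajectories (where y₁ᵀy₂ accounts for the internal power exchange). -/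
open Matrix

theorem HasDerivAt.dotProduct {𝕜 ι : Type*} [NontriviallyNormedField 𝕜] [Fintype ι]
    {f g : 𝕜 → ι → 𝕜} {f' g' : ι → 𝕜} {x : 𝕜}
    (hf : HasDerivAt f f' x) (hg : HasDerivAt g g' x) :
    HasDerivAt (fun s => f s ⬝ᵥ g s) (f' ⬝ᵥ g x + f x ⬝ᵥ g') x := by
  have hsum : HasDerivAt (fun s => ∑ i, f s i * g s i) (∑ i, (f' i * g x i + f x i * g' i)) x :=
    HasDerivAt.fun_sum fun i _ => (hasDerivAt_pi.mp hf i).mul (hasDerivAt_pi.mp hg i)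
  simpa only [_root_.dotProduct, Finset.sum_add_distrib] using hsum

/-- Positive feedback interconnection of two NNI systems (`u₁ = y₂`, `u₂ = y₁`,
external input `r₁ = 0`): the function `V₁ + V₂ - y₁ᵀy₂` is nonincreasing,
i.e. its time derivative along trajectories is `≤ 0`. -/
theorem nni_feedback_interconnection
    (m : ℕ)
    (u₁ u₂ y₁ y₂ yd₁ yd₂ : ℝ → (Fin m → ℝ))
    (v₁ v₂ dv₁ dv₂ : ℝ → ℝ)
    (hy₁ : ∀ t, HasDerivAt y₁ (yd₁ t) t)
    (hy₂ : ∀ t, HasDerivAt y₂ (yd₂ t) t)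
    (hv₁ : ∀ t, HasDerivAt v₁ (dv₁ t) t)
    (hv₂ : ∀ t, HasDerivAt v₂ (dv₂ t) t)
    -- NNI property of each subsystem
    (hnni₁ : ∀ t, dv₁ t ≤ yd₁ t ⬝ᵥ u₁ t)
    (hnni₂ : ∀ t, dv₂ t ≤ yd₂ t ⬝ᵥ u₂ t)
    -- positive feedback interconnection with r₁ = 0
    (hfb₁ : ∀ t, u₁ t = y₂ t)
    (hfb₂ : ∀ t, u₂ t = y₁ t) :
    ∀ t, HasDerivAt (fun s => v₁ s + v₂ s - y₁ s ⬝ᵥ y₂ s)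
          (dv₁ t + dv₂ t - (yd₁ t ⬝ᵥ y₂ t + y₁ t ⬝ᵥ yd₂ t)) t ∧
         dv₁ t + dv₂ t - (yd₁ t ⬝ᵥ y₂ t + y₁ t ⬝ᵥ yd₂ t) ≤ 0 := by
  intro t
  refine ⟨((hv₁ t).add (hv₂ t)).sub ((hy₁ t).dotProduct (hy₂ t)), ?_⟩
  -- Under the feedback law the power supplied to the two subsystems is exactly d/dt (y₁ᵀy₂).
  have supply_le_power_exchange : dv₁ t + dv₂ t ≤ yd₁ t ⬝ᵥ y₂ t + y₁ t ⬝ᵥ yd₂ t := by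
    rw [dotProduct_comm (y₁ t), ← hfb₁ t, ← hfb₂ t]
    exact add_le_add (hnni₁ t) (hnni₂ t)
  exact sub_nonpos.mpr supply_le_power_exchange
end

section
/- Consider the scalar cascade system η̇ = aη + bξ, ξ̇ = u, y = cη with a < 0 and cb > 0. Then V(η,ξ) = (ca²/(2b))η² + ca·ηξ + (cb/2)ξ² is positive semidefinite and satisfies V̇ ≤ c η̇ ξ̇ = ẏ u along trajectories; hence the cascade of a first-order positive real system with an integrator is nonlinear negative imaginary. -/
/-!
With `w = aη + bξ` (so that `η̇ = w`), the storage function is the perfect square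
`V = (c / (2b)) w²`, nonnegative because `c / b > 0`. Along trajectories
`ẇ = aw + bu`, hence `V̇ = (c / b) w ẇ = (ac / b) w² + c w u`, and the first term is
nonpositive since `a < 0`.
-/

section ScalarCascade

variable {a b c : ℝ}

lemma div_pos_of_mul_pos (hcb : 0 < c * b) : 0 < c / b :=
  div_pos_iff.2 (mul_pos_iff.1 hcb)

lemma cascade_storage_eq_sq (hb : b ≠ 0) (x z : ℝ) :
    c * a ^ 2 / (2 * b) * x ^ 2 + c * a * x * z + c * b / 2 * z ^ 2
      = c / b / 2 * (a * x + b * z) ^ 2 := by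
  field_simp
  ring

lemma cascade_storage_nonneg (hcb : 0 < c * b) (x z : ℝ) :
    0 ≤ c * a ^ 2 / (2 * b) * x ^ 2 + c * a * x * z + c * b / 2 * z ^ 2 := by
  rw [cascade_storage_eq_sq (right_ne_zero_of_mul hcb.ne')]
  have := div_pos_of_mul_pos hcb
  positivity

lemma hasDerivAt_cascade_storage (hb : b ≠ 0) {η ξ : ℝ → ℝ} {η' ξ' t : ℝ}
    (hη : HasDerivAt η η' t) (hξ : HasDerivAt ξ ξ' t) :
    HasDerivAt
      (fun s => c * a ^ 2 / (2 * b) * η s ^ 2 + c * a * η s * ξ s + c * b / 2 * ξ s ^ 2)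
      (c / b * (a * η t + b * ξ t) * (a * η' + b * ξ')) t := by
  have hw : HasDerivAt (fun s => a * η s + b * ξ s) (a * η' + b * ξ') t :=
    (hη.const_mul a).add (hξ.const_mul b)
  simp_rw [cascade_storage_eq_sq hb]
  exact ((hw.fun_pow 2).const_mul (c / b / 2)).congr_deriv (by norm_num; ring)

lemma cascade_dissipation_nonpos (ha : a < 0) (hcb : 0 < c * b) (w : ℝ) :
    a * c / b * w ^ 2 ≤ 0 := by
  rw [mul_div_assoc]
  exact mul_nonpos_of_nonpos_of_nonneg
    (mul_nonpos_of_nonpos_of_nonneg ha.le (div_pos_of_mul_pos hcb).le) (sq_nonneg w)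

end ScalarCascade

/-- Scalar cascade of a first-order positive real system with an integrator:
`η̇ = aη + bξ`, `ξ̇ = u`, `y = cη` with `a < 0`, `cb > 0`. Then
`V(η,ξ) = (ca²/(2b))η² + ca ηξ + (cb/2)ξ²` is positive semidefinite and
`V̇ = (ac/b)η̇² + c η̇ u ≤ c η̇ u = ẏ u` along trajectories. -/
theorem scalar_pr_integrator_cascade_nni
    (a b c : ℝ) (ha : a < 0) (hcb : 0 < c * b)
    (η ξ u : ℝ → ℝ)
    (hη : ∀ t, HasDerivAt η (a * η t + b * ξ t) t)
    (hξ : ∀ t, HasDerivAt ξ (u t) t) :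
    (∀ x z : ℝ, 0 ≤ (c * a^2 / (2 * b)) * x^2 + c * a * x * z + (c * b / 2) * z^2) ∧
    (∀ t, HasDerivAt
        (fun s => (c * a^2 / (2 * b)) * (η s)^2 + c * a * η s * ξ s + (c * b / 2) * (ξ s)^2)
        ((a * c / b) * (a * η t + b * ξ t)^2 + c * (a * η t + b * ξ t) * u t) t) ∧
    (∀ t, (a * c / b) * (a * η t + b * ξ t)^2 + c * (a * η t + b * ξ t) * u t
        ≤ c * (a * η t + b * ξ t) * u t) := by
  have hb : b ≠ 0 := right_ne_zero_of_mul hcb.ne'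
  refine ⟨cascade_storage_nonneg hcb, fun t => ?_, fun t => ?_⟩
  · convert hasDerivAt_cascade_storage hb (hη t) (hξ t) using 1
    field_simp
  · linarith [cascade_dissipation_nonpos ha hcb (a * η t + b * ξ t)]
end
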